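/- Let Y be an alphabet indexed by ℕ and E an alphabet indexed by a commutative monoid (I,×), and let A = Y×E with letters (y_i, e_l). The duffle product, defined by (y_i,e_l)u ⧈ (y_j,e_k)v = (y_i,e_l)(u ⧈ (y_j,e_k)v) + (y_j,e_k)((y_i,e_l)u ⧈ v) + (y_{i+j}, e_{l×k})(u ⧈ v) with the empty word as unit, lies in 𝒫 with bracket [(y_i,e_l),(y_j,e_k)] = (y_{i+j}, e_{l×k}); in particular it is commutative and associative. -/

import Mathlib

/-! By bilinearity the quasi-shuffle recursion holds for `(a P) ⋆ (b Q)` with arbitrary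
polynomials `P`, `Q`, so `(au ⋆ bv) ⋆ cw` and `au ⋆ (bv ⋆ cw)` both expand into seven terms,
one for each nonempty set of leading letters that is merged. Induction on the three words matches
these terms pairwise, the one merging all three letters because the bracket is associative.
Commutativity is the same argument with two words and a commutative bracket. -/

open Finsupp Finset Filter

/-- A word `w` seen as an element of the free module `A⟨X⟩` (coefficient 1). -/
noncomputable def delta (A : Type*) [CommRing A] {X : Type*} (w : List X) : List X →₀ A :=
  Finsupp.single w 1

/-- Left concatenation by a letter, as a linear map on `A⟨X⟩`. -/
noncomputable def lcons (A : Type*) [CommRing A] {X : Type*} (x : X) :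
    (List X →₀ A) →ₗ[A] (List X →₀ A) :=
  Finsupp.lmapDomain A A (List.cons x)

section QuasiShuffle

variable {A X : Type*} [CommRing A]

theorem lcons_delta (a : X) (u : List X) : lcons A a (delta A u) = delta A (a :: u) := by
  simp [lcons, delta, Finsupp.mapDomain_single]

theorem single_eq_smul_delta (u : List X) (c : A) : Finsupp.single u c = c • delta A u := by
  simp [delta, Finsupp.smul_single]

structure IsQuasiShuffle (br : X → X → X)
    (star : (List X →₀ A) →ₗ[A] (List X →₀ A) →ₗ[A] (List X →₀ A)) : Prop where
  nil_left : ∀ w : List X, star (delta A []) (delta A w) = delta A w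
  nil_right : ∀ w : List X, star (delta A w) (delta A []) = delta A w
  cons_cons : ∀ (a b : X) (u v : List X),
    star (delta A (a :: u)) (delta A (b :: v)) =
      lcons A a (star (delta A u) (delta A (b :: v)))
        + lcons A b (star (delta A (a :: u)) (delta A v))
        + lcons A (br a b) (star (delta A u) (delta A v))

namespace IsQuasiShuffle

variable {br : X → X → X}
  {star : (List X →₀ A) →ₗ[A] (List X →₀ A) →ₗ[A] (List X →₀ A)}

theorem star_nil_left (h : IsQuasiShuffle br star) (P : List X →₀ A) :
    star (delta A []) P = P := by
  have : star (delta A []) = LinearMap.id :=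
    Finsupp.lhom_ext' fun w => LinearMap.ext_ring (h.nil_left w)
  rw [this, LinearMap.id_apply]

theorem star_nil_right (h : IsQuasiShuffle br star) (P : List X →₀ A) :
    star P (delta A []) = P := by
  have : star.flip (delta A []) = LinearMap.id :=
    Finsupp.lhom_ext' fun w => LinearMap.ext_ring (h.nil_right w)
  rw [← LinearMap.flip_apply star, this, LinearMap.id_apply]

theorem star_lcons_lcons (h : IsQuasiShuffle br star) (a b : X) (P Q : List X →₀ A) :
    star (lcons A a P) (lcons A b Q) =
      lcons A a (star P (lcons A b Q)) + lcons A b (star (lcons A a P) Q)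
        + lcons A (br a b) (star P Q) := by
  induction P using Finsupp.induction_linear with
  | zero => simp
  | add P₁ P₂ h₁ h₂ =>
    simp only [map_add, LinearMap.add_apply, h₁, h₂]
    abel
  | single u c =>
    induction Q using Finsupp.induction_linear with
    | zero => simp
    | add Q₁ Q₂ h₁ h₂ =>
      simp only [map_add, h₁, h₂]
      abel
    | single v d =>
      simp only [single_eq_smul_delta, map_smul, LinearMap.smul_apply, lcons_delta,
        h.cons_cons a b u v, ← smul_add]

theorem star_lcons_delta_cons (h : IsQuasiShuffle br star) (a c : X) (P : List X →₀ A)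
    (w : List X) :
    star (lcons A a P) (delta A (c :: w)) =
      lcons A a (star P (delta A (c :: w))) + lcons A c (star (lcons A a P) (delta A w))
        + lcons A (br a c) (star P (delta A w)) := by
  simpa only [lcons_delta] using h.star_lcons_lcons a c P (delta A w)

theorem star_delta_cons_lcons (h : IsQuasiShuffle br star) (a b : X) (u : List X)
    (Q : List X →₀ A) :
    star (delta A (a :: u)) (lcons A b Q) =
      lcons A a (star (delta A u) (lcons A b Q)) + lcons A b (star (delta A (a :: u)) Q)
        + lcons A (br a b) (star (delta A u) Q) := by
  simpa only [lcons_delta] using h.star_lcons_lcons a b (delta A u) Q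

theorem comm (h : IsQuasiShuffle br star) (hbr : ∀ a b, br a b = br b a) (u v : List X) :
    star (delta A u) (delta A v) = star (delta A v) (delta A u) := by
  induction u generalizing v with
  | nil => rw [h.nil_left, h.nil_right]
  | cons a u ihu =>
    induction v with
    | nil => rw [h.nil_left, h.nil_right]
    | cons b v ihv =>
      rw [h.cons_cons, h.cons_cons, ihu, ihu, ihv, hbr]
      abel

theorem star_star_delta_cons (h : IsQuasiShuffle br star) (a b c : X) (u v w : List X) :
    star (star (delta A (a :: u)) (delta A (b :: v))) (delta A (c :: w)) =
      lcons A a (star (star (delta A u) (delta A (b :: v))) (delta A (c :: w)))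
        + lcons A b (star (star (delta A (a :: u)) (delta A v)) (delta A (c :: w)))
        + lcons A (br a b) (star (star (delta A u) (delta A v)) (delta A (c :: w)))
        + lcons A c (star (star (delta A (a :: u)) (delta A (b :: v))) (delta A w))
        + lcons A (br a c) (star (star (delta A u) (delta A (b :: v))) (delta A w))
        + lcons A (br b c) (star (star (delta A (a :: u)) (delta A v)) (delta A w))
        + lcons A (br (br a b) c) (star (star (delta A u) (delta A v)) (delta A w)) := by
  rw [h.cons_cons a b u v]
  simp only [map_add, LinearMap.add_apply, h.star_lcons_delta_cons]
  abel

theorem star_delta_cons_star (h : IsQuasiShuffle br star) (a b c : X) (u v w : List X) :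
    star (delta A (a :: u)) (star (delta A (b :: v)) (delta A (c :: w))) =
      lcons A a (star (delta A u) (star (delta A (b :: v)) (delta A (c :: w))))
        + lcons A b (star (delta A (a :: u)) (star (delta A v) (delta A (c :: w))))
        + lcons A (br a b) (star (delta A u) (star (delta A v) (delta A (c :: w))))
        + lcons A c (star (delta A (a :: u)) (star (delta A (b :: v)) (delta A w)))
        + lcons A (br a c) (star (delta A u) (star (delta A (b :: v)) (delta A w)))
        + lcons A (br b c) (star (delta A (a :: u)) (star (delta A v) (delta A w)))
        + lcons A (br a (br b c)) (star (delta A u) (star (delta A v) (delta A w))) := by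
  rw [h.cons_cons b c v w]
  simp only [map_add, h.star_delta_cons_lcons]
  abel

theorem assoc (h : IsQuasiShuffle br star) (hbr : ∀ a b c, br (br a b) c = br a (br b c))
    (u v w : List X) :
    star (star (delta A u) (delta A v)) (delta A w) =
      star (delta A u) (star (delta A v) (delta A w)) := by
  induction u generalizing v w with
  | nil => rw [h.nil_left, h.star_nil_left]
  | cons a u ihu =>
    induction v generalizing w with
    | nil => rw [h.nil_right, h.nil_left]
    | cons b v ihv =>
      induction w with
      | nil => rw [h.star_nil_right, h.star_nil_right]
      | cons c w ihw =>
        rw [h.star_star_delta_cons, h.star_delta_cons_star, ihu, ihu, ihu, ihu, ihv, ihv, ihw,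
          hbr]

end IsQuasiShuffle

end QuasiShuffle

/-- the duffle product on the alphabet `Y × E` indexed by `ℕ × I`, with bracket
`[(y_i,e_l),(y_j,e_k)] = (y_(i+j), e_(l×k))`, lies in `𝒫`; in particular it is commutative
and associative. -/
theorem stmt6 {A I : Type*} [CommRing A] [CommMonoid I]
    (star : (List (ℕ × I) →₀ A) →ₗ[A] (List (ℕ × I) →₀ A) →ₗ[A] (List (ℕ × I) →₀ A))
    (hunitl : ∀ w : List (ℕ × I), star (delta A []) (delta A w) = delta A w)
    (hunitr : ∀ w : List (ℕ × I), star (delta A w) (delta A []) = delta A w)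
    (hrec : ∀ (a b : (ℕ × I)) (u v : List (ℕ × I)),
      star (delta A (a :: u)) (delta A (b :: v)) =
        lcons A a (star (delta A u) (delta A (b :: v)))
          + lcons A b (star (delta A (a :: u)) (delta A v))
          + lcons A (a.1 + b.1, a.2 * b.2) (star (delta A u) (delta A v))) :
    (∀ w₁ w₂ : List (ℕ × I), star (delta A w₁) (delta A w₂) = star (delta A w₂) (delta A w₁)) ∧
    (∀ w₁ w₂ w₃ : List (ℕ × I),
        star (star (delta A w₁) (delta A w₂)) (delta A w₃)
          = star (delta A w₁) (star (delta A w₂) (delta A w₃))) := by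
  have h : IsQuasiShuffle (fun a b : ℕ × I => (a.1 + b.1, a.2 * b.2)) star :=
    ⟨hunitl, hunitr, hrec⟩
  exact ⟨h.comm fun a b => by rw [add_comm, mul_comm],
    h.assoc fun a b c => by simp only [add_assoc, mul_assoc]⟩
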